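/- Let d ≥ 1, L > 0, and 0 < c < 1. Define a diagonal matrix Λ ∈ ℝ^{d×d} recursively by Λ_{d,d} = 1 and Λ_{i,i} = (d²L/c) · max_{j > i} Λ_{j,j} for i < d. Let A ∈ ℝ^{d×d} be any strictly lower triangular matrix (A_{i,j} = 0 for i ≤ j) whose entries satisfy |A_{i,j}| ≤ √d · L for all i, j. Then every entry of the conjugated matrix ΛAΛ^{-1} satisfies |(ΛAΛ^{-1})_{i,j}| ≤ c / d^{3/2}. -/
import Mathlib


/-- the key entrywise scaling estimate in the proof of Proposition 1.
With `Λ` defined recursively by `Λ_{d,d} = 1` and `Λ_{i,i} = (d²L/c) max_{j>i} Λ_{j,j}`,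
any strictly lower triangular matrix `A` with entries bounded by `√d · L` satisfies
`|(Λ A Λ⁻¹)_{i,j}| ≤ c / d^{3/2}`. -/
theorem conjugated_entries_le (d : ℕ) (hd : 1 ≤ d) (L c : ℝ)
    (hL : 0 < L) (hc0 : 0 < c) (hc1 : c < 1)
    (Λ : Fin d → ℝ)
    (hlast : Λ ⟨d - 1, by omega⟩ = 1)
    (hrec : ∀ i : Fin d, (i : ℕ) < d - 1 →
      Λ i = ((d : ℝ) ^ 2 * L / c) * ⨆ j : {j : Fin d // i < j}, Λ j.1)
    (A : Matrix (Fin d) (Fin d) ℝ)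
    (htri : ∀ i j : Fin d, i ≤ j → A i j = 0)
    (hbd : ∀ i j : Fin d, |A i j| ≤ Real.sqrt d * L) :
    ∀ i j : Fin d,
      |(Matrix.diagonal Λ * A * (Matrix.diagonal Λ)⁻¹) i j| ≤ c / (d : ℝ) ^ ((3 : ℝ) / 2) := by
  have hdpos : (0:ℝ) < d := by exact_mod_cast hd
  have hfac : 0 < (d:ℝ)^2 * L / c := by positivity
  set lastI : Fin d := ⟨d - 1, by omega⟩ with hlastI
  have hbdd : ∀ i : Fin d, BddAbove (Set.range fun j : {j : Fin d // i < j} => Λ j.1) :=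
    fun i => Set.Finite.bddAbove (Set.finite_range _)
  -- positivity of Λ
  have hpos : ∀ i : Fin d, 0 < Λ i := by
    intro i
    rcases lt_or_ge (i : ℕ) (d - 1) with h | h
    · have hsup : Λ lastI ≤ ⨆ j : {j : Fin d // i < j}, Λ j.1 := by
        have hi : i < lastI := by
          rw [Fin.lt_def]; exact h
        exact le_ciSup (hbdd i) ⟨lastI, hi⟩
      rw [hrec i h, hlast] at *
      nlinarith [hsup]
    · have : i = lastI := by
        apply Fin.ext
        have := i.isLt
        simp only [hlastI]
        omega
      rw [this, hlast]; norm_num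
  -- key comparison: for j < i, Λ j ≥ (d²L/c) Λ i
  have hkey : ∀ i j : Fin d, j < i → ((d:ℝ)^2 * L / c) * Λ i ≤ Λ j := by
    intro i j hji
    have hj : (j : ℕ) < d - 1 := by
      have h1 : (j:ℕ) < (i:ℕ) := hji
      have := i.isLt
      omega
    have hsup : Λ i ≤ ⨆ k : {k : Fin d // j < k}, Λ k.1 :=
      le_ciSup (hbdd j) ⟨i, hji⟩
    rw [hrec j hj]
    exact mul_le_mul_of_nonneg_left hsup (le_of_lt hfac)
  -- the rpow identity
  have hDpos : 0 < (d:ℝ) ^ ((3:ℝ)/2) := Real.rpow_pos_of_pos hdpos _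
  have hDk : Real.sqrt d * (d:ℝ) ^ ((3:ℝ)/2) = (d:ℝ)^2 := by
    rw [Real.sqrt_eq_rpow, ← Real.rpow_add hdpos]
    rw [show (1:ℝ)/2 + 3/2 = ((2:ℕ):ℝ) by norm_num, Real.rpow_natCast]
  have hinv : (Matrix.diagonal Λ)⁻¹ = Matrix.diagonal (fun k => (Λ k)⁻¹) := by
    apply Matrix.inv_eq_right_inv
    rw [Matrix.diagonal_mul_diagonal,
      show (fun k => Λ k * (Λ k)⁻¹) = fun _ => (1:ℝ) from
        funext fun k => mul_inv_cancel₀ (hpos k).ne', Matrix.diagonal_one]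
  intro i j
  have hentry : (Matrix.diagonal Λ * A * (Matrix.diagonal Λ)⁻¹) i j
      = Λ i * A i j * (Λ j)⁻¹ := by
    rw [hinv, Matrix.mul_diagonal, Matrix.diagonal_mul]
  rw [hentry]
  rcases le_or_gt i j with hij | hij
  · rw [htri i j hij]
    simp only [mul_zero, zero_mul, abs_zero]
    positivity
  · have hji := hkey i j hij
    have hAi := hbd i j
    have hi := hpos i
    have hj := hpos j
    have hsd : (0:ℝ) < Real.sqrt d := Real.sqrt_pos.mpr hdpos
    rw [abs_mul, abs_mul, abs_of_pos hi, abs_inv, abs_of_pos hj]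
    have h2 : (d:ℝ)^2 * L * Λ i ≤ c * Λ j := by
      rw [div_mul_eq_mul_div, div_le_iff₀ hc0] at hji
      linarith
    have heq : Λ i * |A i j| * (Λ j)⁻¹ = (Λ i * |A i j|) / Λ j := by ring
    rw [heq, div_le_div_iff₀ hj hDpos]
    calc Λ i * |A i j| * (d:ℝ) ^ ((3:ℝ)/2)
        ≤ Λ i * (Real.sqrt d * L) * (d:ℝ) ^ ((3:ℝ)/2) :=
          mul_le_mul_of_nonneg_right (mul_le_mul_of_nonneg_left hAi hi.le) hDpos.le
      _ = (d:ℝ)^2 * L * Λ i := by rw [← hDk]; ring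
      _ ≤ c * Λ j := h2
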